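/- arXiv:2405.01278 — 7 statements merged into one kernel-verified Lean document; each statement's English description precedes it below -/
import Mathlib

section
/- Let n ≥ 1, let S be a nonempty set of positive integers, and let x > 1 be real. Then Φ_{D,S,n}(x) = ∏_{d ∣ n} (x^d − 1)^{μ_{D,S}(n/d)}, where the exponent μ_{D,S}(n/d) is an integer (the power is an integer power of the positive real x^d − 1). -/
/-!
Möbius inversion of `μ_{D,S} = μ * ρ_S` gives `ρ_S(g) = ∑_{e ∣ g} μ_{D,S}(e)` for `g ≥ 1`. Applied to
`g = gcd(j, n)`, this spreads each factor `x − ζ^j` of `Φ_{D,S,n}(x)` over the divisors `e` of `n`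
that divide `j`. Grouping by `e`, the factors with `e ∣ j` are `x − (ζ^e)^k` for `0 ≤ k < n/e`, and
`ζ^e` is a primitive `(n/e)`-th root of unity, so their product is `x^{n/e} − 1`. Since `x^n ≠ 1`,
no factor vanishes and the integer exponents may be added.
-/

open Complex Polynomial Finset

/-- The generalized cyclotomic polynomial `Φ_{D,S,n}(X) = ∏_{1 ≤ j ≤ n, gcd(j,n) ∈ S} (X − ζ_n^j)`. -/
noncomputable def genCyc (S : Set ℕ) [DecidablePred (· ∈ S)] (n : ℕ) : Polynomial ℂ :=
  ∏ j ∈ (Finset.Icc 1 n).filter (fun j => Nat.gcd j n ∈ S),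
    (X - C (Complex.exp (2 * Real.pi * Complex.I / n) ^ j))

/-- The Möbius-type function `μ_{D,S}(m) = ∑_{e ∣ m} μ(e) ρ_S(m/e)`. -/
def muDS (S : Set ℕ) [DecidablePred (· ∈ S)] (m : ℕ) : ℤ :=
  ∑ e ∈ m.divisors, ArithmeticFunction.moebius e * (if m / e ∈ S then 1 else 0)

theorem zpow_sum₀ {ι G₀ : Type*} [CommGroupWithZero G₀] {a : G₀} (ha : a ≠ 0) (s : Finset ι)
    (f : ι → ℤ) : a ^ (∑ i ∈ s, f i) = ∏ i ∈ s, a ^ f i := by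
  classical
  induction s using Finset.induction_on with
  | empty => simp
  | insert i s hi ih => rw [sum_insert hi, prod_insert hi, zpow_add₀ ha, ih]

theorem prod_Icc_one_eq_prod_range {M : Type*} [CommMonoid M] {f : ℕ → M} {n : ℕ}
    (h : f n = f 0) : ∏ j ∈ Icc 1 n, f j = ∏ j ∈ range n, f j := by
  rcases n with _ | n
  · simp
  rw [range_eq_Ico, prod_eq_prod_Ico_succ_bot n.succ_pos, ← Ico_add_one_right_eq_Icc,
    prod_Ico_succ_top (Nat.succ_pos n), h, mul_comm]

theorem prod_range_mul_filter_dvd {M : Type*} [CommMonoid M] (f : ℕ → M) {e : ℕ} (he : 0 < e)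
    (d : ℕ) : ∏ j ∈ range (e * d) with e ∣ j, f j = ∏ k ∈ range d, f (e * k) := by
  have : {j ∈ range (e * d) | e ∣ j} = (range d).image (e * ·) := by
    ext j
    simp only [mem_filter, mem_range, mem_image]
    constructor
    · rintro ⟨hj, k, rfl⟩
      exact ⟨k, Nat.lt_of_mul_lt_mul_left hj, rfl⟩
    · rintro ⟨k, hk, rfl⟩
      exact ⟨Nat.mul_lt_mul_of_pos_left hk he, dvd_mul_right e k⟩
  rw [this, prod_image fun a _ b _ h => Nat.eq_of_mul_eq_mul_left he h]

theorem sum_divisors_muDS (S : Set ℕ) [DecidablePred (· ∈ S)] {m : ℕ} (hm : m ≠ 0) :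
    ∑ e ∈ m.divisors, muDS S e = if m ∈ S then 1 else 0 := by
  refine ArithmeticFunction.sum_eq_iff_sum_smul_moebius_eq (f := muDS S)
    (g := fun k => if k ∈ S then 1 else 0) |>.2 (fun k _ => ?_) m (Nat.pos_of_ne_zero hm)
  exact Nat.sum_divisorsAntidiagonal fun a b =>
    ArithmeticFunction.moebius a • if b ∈ S then (1 : ℤ) else 0

theorem prod_filter_gcd_mem_eq_prod_divisors_zpow {G₀ : Type*} [CommGroupWithZero G₀]
    (S : Set ℕ) [DecidablePred (· ∈ S)] {n : ℕ} (hn : n ≠ 0) {s : Finset ℕ} {P : ℕ → G₀}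
    (hP : ∀ j ∈ s, P j ≠ 0) :
    ∏ j ∈ s with j.gcd n ∈ S, P j = ∏ e ∈ n.divisors, (∏ j ∈ s with e ∣ j, P j) ^ muDS S e := by
  have hexp : ∀ j ∈ s, ∏ e ∈ n.divisors, (if e ∣ j then P j ^ muDS S e else 1)
      = if j.gcd n ∈ S then P j else 1 := by
    intro j hj
    have hdiv : {e ∈ n.divisors | e ∣ j} = (j.gcd n).divisors := by
      rw [← Nat.divisors_filter_dvd_of_dvd hn (Nat.gcd_dvd_right j n)]
      exact filter_congr fun e he => by
        rw [Nat.dvd_gcd_iff, and_iff_left (Nat.dvd_of_mem_divisors he)]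
    rw [← prod_filter, ← zpow_sum₀ (hP j hj), hdiv,
      sum_divisors_muDS S (Nat.gcd_ne_zero_right hn)]
    split_ifs <;> simp
  calc ∏ j ∈ s with j.gcd n ∈ S, P j
      = ∏ j ∈ s, ∏ e ∈ n.divisors, (if e ∣ j then P j ^ muDS S e else 1) := by
        rw [prod_filter]; exact (prod_congr rfl hexp).symm
    _ = ∏ e ∈ n.divisors, ∏ j ∈ s, (if e ∣ j then P j ^ muDS S e else 1) := prod_comm
    _ = ∏ e ∈ n.divisors, (∏ j ∈ s with e ∣ j, P j) ^ muDS S e := by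
        simp_rw [← prod_filter, prod_zpow]

theorem prod_range_filter_dvd_sub_pow {R : Type*} [CommRing R] [IsDomain R] {ζ : R} {n e : ℕ}
    (hζ : IsPrimitiveRoot ζ n) (hn : 0 < n) (he : e ∣ n) (z : R) :
    ∏ j ∈ range n with e ∣ j, (z - ζ ^ j) = z ^ (n / e) - 1 := by
  obtain ⟨d, rfl⟩ := he
  have he0 : 0 < e := Nat.pos_of_mul_pos_right hn
  have hd : 0 < d := Nat.pos_of_mul_pos_left hn
  have h := congrArg (eval z) (X_pow_sub_C_eq_prod (hζ.pow hn rfl) hd (one_pow d))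
  simp only [eval_sub, eval_pow, eval_X, eval_C, eval_prod, mul_one] at h
  rw [prod_range_mul_filter_dvd _ he0, Nat.mul_div_cancel_left _ he0, h]
  simp only [pow_mul]

theorem prod_range_filter_gcd_mem_sub_pow {K : Type*} [Field K] (S : Set ℕ)
    [DecidablePred (· ∈ S)] {ζ : K} {n : ℕ} (hζ : IsPrimitiveRoot ζ n) (hn : 0 < n) {z : K}
    (hz : z ^ n ≠ 1) :
    ∏ j ∈ range n with j.gcd n ∈ S, (z - ζ ^ j)
      = ∏ d ∈ n.divisors, (z ^ d - 1) ^ muDS S (n / d) := by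
  have hP : ∀ j ∈ range n, z - ζ ^ j ≠ 0 := fun j _ h => hz <| by
    rw [sub_eq_zero.1 h, ← pow_mul, mul_comm, pow_mul, hζ.pow_eq_one, one_pow]
  calc ∏ j ∈ range n with j.gcd n ∈ S, (z - ζ ^ j)
      = ∏ e ∈ n.divisors, (z ^ (n / e) - 1) ^ muDS S e := by
        rw [prod_filter_gcd_mem_eq_prod_divisors_zpow S hn.ne' hP]
        exact prod_congr rfl fun e he => by
          rw [prod_range_filter_dvd_sub_pow hζ hn (Nat.dvd_of_mem_divisors he)]
    _ = ∏ d ∈ n.divisors, (z ^ (n / (n / d)) - 1) ^ muDS S (n / d) :=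
        (Nat.prod_div_divisors n _).symm
    _ = ∏ d ∈ n.divisors, (z ^ d - 1) ^ muDS S (n / d) := prod_congr rfl fun d hd => by
        rw [Nat.div_div_self (Nat.dvd_of_mem_divisors hd) hn.ne']

theorem stmt1_general (S : Set ℕ) [DecidablePred (· ∈ S)]
    (n : ℕ) (hn : 1 ≤ n) (x : ℝ) (hx : 1 < x) :
    (genCyc S n).eval (x : ℂ) = ∏ d ∈ n.divisors, ((x : ℂ) ^ d - 1) ^ (muDS S (n / d)) := by
  set ζ := Complex.exp (2 * Real.pi * Complex.I / n)
  have hζ : IsPrimitiveRoot ζ n := Complex.isPrimitiveRoot_exp n (by omega)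
  have hx' : (x : ℂ) ^ n ≠ 1 := by exact_mod_cast (one_lt_pow₀ hx (by omega)).ne'
  rw [← prod_range_filter_gcd_mem_sub_pow S hζ hn hx', genCyc, eval_prod, prod_filter,
    prod_filter, ← prod_Icc_one_eq_prod_range]
  · simp [ζ]
  · simp [hζ.pow_eq_one]

theorem stmt1 (S : Set ℕ) [DecidablePred (· ∈ S)] (hS : S.Nonempty)
    (hSpos : ∀ m ∈ S, 1 ≤ m) (n : ℕ) (hn : 1 ≤ n) (x : ℝ) (hx : 1 < x) :
    (genCyc S n).eval (x : ℂ) = ∏ d ∈ n.divisors, ((x : ℂ) ^ d - 1) ^ (muDS S (n / d)) :=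
  stmt1_general S n hn x hx
end

section
/- Let n ≥ 1 and let S be a nonempty set of positive integers. Then for every nonzero x ∈ ℂ, Φ_{D,S,n}(x) = (−1)^{ρ_S(n)} · x^{φ_{D,S}(n)} · Φ_{D,S,n}(1/x), where φ_{D,S}(n) = #{1 ≤ j ≤ n : gcd(j,n) ∈ S} is the degree of Φ_{D,S,n}. Hence Φ_{D,S,n} is antipalindromic when n ∈ S and palindromic when n ∉ S. -/
open Complex Polynomial Finset

/-- The generalized Euler function `φ_{D,S}(n) = #{1 ≤ j ≤ n : gcd(j,n) ∈ S}`. -/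
def phiDS (S : Set ℕ) [DecidablePred (· ∈ S)] (n : ℕ) : ℕ :=
  ((Finset.Icc 1 n).filter (fun j => Nat.gcd j n ∈ S)).card

/-!
The roots `ζ_n^j` of `Φ_{D,S,n}` come in inverse pairs, since `j ↦ n - j (mod n)` preserves
`gcd(j, n)`. Hence `x^d Φ(1/x) = ∏ (1 - x ζ^j) = ∏ (-ζ^j) · ∏ (x - ζ^{-j}) = c · Φ(x)` with
`c = ∏ (-ζ^j)`. Evaluating this identity at `x = 1` shows `c = 1` as soon as no root equals `1`;
since `1 = ζ^n` is a root exactly when `n ∈ S`, this gives `c = (-1)^{ρ_S(n)}`.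
-/

section InverseClosedRoots

variable {K ι : Type*} [Field K] (T : Finset ι) (a : ι → K) (σ : ι → ι)

theorem pow_card_mul_prod_inv_sub_of_involution (hσ : ∀ j ∈ T, σ j ∈ T)
    (hσσ : ∀ j ∈ T, σ (σ j) = j) (ha : ∀ j ∈ T, a (σ j) * a j = 1) {x : K} (hx : x ≠ 0) :
    x ^ #T * ∏ j ∈ T, (x⁻¹ - a j) = (∏ j ∈ T, -a j) * ∏ j ∈ T, (x - a j) :=
  calc x ^ #T * ∏ j ∈ T, (x⁻¹ - a j) = ∏ j ∈ T, (-a j * (x - a (σ j))) := by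
        rw [← prod_const, ← prod_mul_distrib]
        refine prod_congr rfl fun j hj => ?_
        rw [mul_sub, mul_inv_cancel₀ hx]
        linear_combination -ha j hj
    _ = (∏ j ∈ T, -a j) * ∏ j ∈ T, (x - a j) := by
        rw [prod_mul_distrib]
        congr 1
        exact prod_nbij' σ σ hσ hσ hσσ hσσ fun _ _ => rfl

theorem prod_neg_eq_one_of_involution (hσ : ∀ j ∈ T, σ j ∈ T)
    (hσσ : ∀ j ∈ T, σ (σ j) = j) (ha : ∀ j ∈ T, a (σ j) * a j = 1) (ha1 : ∀ j ∈ T, a j ≠ 1) :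
    ∏ j ∈ T, -a j = 1 := by
  have hprod : ∏ j ∈ T, (1 - a j) ≠ 0 :=
    prod_ne_zero_iff.mpr fun j hj => sub_ne_zero.mpr (ha1 j hj).symm
  have h := pow_card_mul_prod_inv_sub_of_involution T a σ hσ hσσ ha one_ne_zero
  rw [one_pow, one_mul, inv_one] at h
  exact (mul_eq_right₀ hprod).mp h.symm

theorem prod_neg_eq_neg_one_pow_of_involution (hσ : ∀ j ∈ T, σ j ∈ T)
    (hσσ : ∀ j ∈ T, σ (σ j) = j) (ha : ∀ j ∈ T, a (σ j) * a j = 1) [DecidableEq ι] {i : ι}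
    (hσi : σ i = i) (hai : a i = 1) (ha1 : ∀ j ∈ T, j ≠ i → a j ≠ 1) :
    ∏ j ∈ T, -a j = (-1) ^ (if i ∈ T then 1 else 0 : ℕ) := by
  have hσ' : ∀ j ∈ T.erase i, σ j ∈ T.erase i := fun j hj => by
    obtain ⟨hji, hjT⟩ := mem_erase.mp hj
    refine mem_erase.mpr ⟨fun h => hji ?_, hσ j hjT⟩
    rw [← hσσ j hjT, h, hσi]
  have hone : ∏ j ∈ T.erase i, -a j = 1 :=
    prod_neg_eq_one_of_involution _ a σ hσ' (fun j hj => hσσ j (mem_of_mem_erase hj))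
      (fun j hj => ha j (mem_of_mem_erase hj))
      (fun j hj => ha1 j (mem_of_mem_erase hj) (ne_of_mem_erase hj))
  split_ifs with hi
  · rw [← mul_prod_erase T _ hi, hone, hai, mul_one, pow_one]
  · rw [← erase_eq_of_notMem hi, hone, pow_zero]

end InverseClosedRoots

section Reflection

variable {n : ℕ}

theorem sub_mod_mem_Icc {j : ℕ} (hj : j ∈ Icc 1 n) : n - j % n ∈ Icc 1 n := by
  have : j % n < n := Nat.mod_lt j (by grind)
  grind

theorem sub_mod_sub_mod {j : ℕ} (hj : j ∈ Icc 1 n) : n - (n - j % n) % n = j := by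
  obtain ⟨h1, h2⟩ := mem_Icc.mp hj
  rcases h2.lt_or_eq with hlt | rfl
  · rw [Nat.mod_eq_of_lt hlt, Nat.mod_eq_of_lt (by omega)]
    omega
  · simp

theorem gcd_sub_mod (hn : 0 < n) (j : ℕ) : Nat.gcd (n - j % n) n = Nat.gcd j n := by
  rw [Nat.gcd_self_sub_left (Nat.mod_lt j hn).le, ← Nat.gcd_rec, Nat.gcd_comm]

theorem pow_sub_mod_mul_pow {M : Type*} [Monoid M] {ζ : M} (hζ : ζ ^ n = 1) (hn : 0 < n)
    (j : ℕ) : ζ ^ (n - j % n) * ζ ^ j = 1 := by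
  have hj : n - j % n + j = n * (j / n + 1) := by
    have := Nat.div_add_mod j n
    have := Nat.mod_lt j hn
    rw [Nat.mul_add, mul_one]
    omega
  rw [← pow_add, hj, pow_mul, hζ, one_pow]

theorem sub_mod_mem_filter_gcd (S : Set ℕ) [DecidablePred (· ∈ S)] {j : ℕ}
    (hj : j ∈ (Icc 1 n).filter fun j => Nat.gcd j n ∈ S) :
    n - j % n ∈ (Icc 1 n).filter fun j => Nat.gcd j n ∈ S := by
  obtain ⟨hjI, hjS⟩ := mem_filter.mp hj
  have hn : 0 < n := by grind
  exact mem_filter.mpr ⟨sub_mod_mem_Icc hjI, by rwa [gcd_sub_mod hn]⟩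

end Reflection

theorem stmt3_general (S : Set ℕ) [DecidablePred (· ∈ S)]
    (n : ℕ) (hn : 1 ≤ n) (x : ℂ) (hx : x ≠ 0) :
    (genCyc S n).eval x =
      (-1 : ℂ) ^ (if n ∈ S then 1 else 0 : ℕ) * x ^ phiDS S n * (genCyc S n).eval (1 / x) := by
  set ζ : ℂ := Complex.exp (2 * Real.pi * Complex.I / n)
  set T := (Icc 1 n).filter fun j => Nat.gcd j n ∈ S
  have hζ : IsPrimitiveRoot ζ n := Complex.isPrimitiveRoot_exp n (by omega)
  have hσ : ∀ j ∈ T, n - j % n ∈ T := fun j => sub_mod_mem_filter_gcd S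
  have hσσ : ∀ j ∈ T, n - (n - j % n) % n = j := fun j hj => sub_mod_sub_mod (mem_filter.mp hj).1
  have ha : ∀ j ∈ T, ζ ^ (n - j % n) * ζ ^ j = 1 := fun j _ => pow_sub_mod_mul_pow hζ.pow_eq_one hn j
  have hnT : n ∈ T ↔ n ∈ S := by simp [T, hn]
  have hsign : ∏ j ∈ T, -ζ ^ j = (-1) ^ (if n ∈ S then 1 else 0 : ℕ) := by
    simp_rw [← hnT]
    refine prod_neg_eq_neg_one_pow_of_involution T (ζ ^ ·) _ hσ hσσ ha (by simp)
      hζ.pow_eq_one fun j hj hjn => hζ.pow_ne_one_of_pos_of_lt (by grind) (by grind)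
  simp only [genCyc, phiDS, eval_prod, eval_sub, eval_X, eval_C, one_div]
  change ∏ j ∈ T, (x - ζ ^ j) = _ * x ^ #T * ∏ j ∈ T, (x⁻¹ - ζ ^ j)
  rw [mul_assoc, pow_card_mul_prod_inv_sub_of_involution T (ζ ^ ·) _ hσ hσσ ha hx, hsign,
    ← mul_assoc, ← pow_add]
  split_ifs <;> norm_num

theorem stmt3 (S : Set ℕ) [DecidablePred (· ∈ S)] (hS : S.Nonempty)
    (hSpos : ∀ m ∈ S, 1 ≤ m) (n : ℕ) (hn : 1 ≤ n) (x : ℂ) (hx : x ≠ 0) :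
    (genCyc S n).eval x =
      (-1 : ℂ) ^ (if n ∈ S then 1 else 0 : ℕ) * x ^ phiDS S n * (genCyc S n).eval (1 / x) :=
  stmt3_general S n hn x hx
end

section
/- Let g, g_U : ℕ_{≥1} → ℂ be functions such that for every n ≥ 1, ∑_{d ∣ n} g(d) = ∑_{d ∣∣ n} g_U(d), where the second sum runs over the unitary divisors d of n. Then for every n ≥ 1, g_U(n) = ∑_{d ∣ n, rad(n) ∣ d} g(d), the sum running over the divisors d of n divisible by rad(n). -/
open Finset

/-- The squarefree kernel `rad(n) = ∏_{p ∣ n} p`. -/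
def rad (n : ℕ) : ℕ := ∏ p ∈ n.primeFactors, p

namespace Stmt8Aux

/-- The unitary kernel: smallest unitary divisor of `n` that `e` divides. -/
def uk (n e : ℕ) : ℕ := ∏ p ∈ e.primeFactors, p ^ n.factorization p

lemma uk_ne_zero (n e : ℕ) (hn : n ≠ 0) : uk n e ≠ 0 := by
  refine Finset.prod_ne_zero_iff.2 fun p hp => ?_
  exact pow_ne_zero _ (Nat.Prime.pos (Nat.prime_of_mem_primeFactors hp)).ne'

lemma uk_factorization (n e q : ℕ) :
    (uk n e).factorization q = if q ∈ e.primeFactors then n.factorization q else 0 := by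
  unfold uk
  rw [Nat.factorization_prod (fun p hp =>
    pow_ne_zero _ (Nat.Prime.pos (Nat.prime_of_mem_primeFactors hp)).ne')]
  rw [Finsupp.finset_sum_apply]
  rw [Finset.sum_congr rfl (fun p hp => by
    rw [Nat.Prime.factorization_pow (Nat.prime_of_mem_primeFactors hp)])]
  simp [Finsupp.single_apply, Finset.sum_ite_eq']

lemma uk_dvd (n e : ℕ) (hn : n ≠ 0) (he : e ∣ n) : uk n e ∣ n := by
  have h0 : e ≠ 0 := fun h => hn (by simpa [h] using he)
  rw [← Nat.factorization_le_iff_dvd (uk_ne_zero n e hn) hn]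
  intro q
  rw [uk_factorization]
  split <;> simp

lemma dvd_uk (n e : ℕ) (hn : n ≠ 0) (he : e ∣ n) : e ∣ uk n e := by
  have h0 : e ≠ 0 := fun h => hn (by simpa [h] using he)
  rw [← Nat.factorization_le_iff_dvd h0 (uk_ne_zero n e hn)]
  intro q
  rw [uk_factorization]
  by_cases hq : q ∈ e.primeFactors
  · simp only [hq, if_true]
    exact (Nat.factorization_le_iff_dvd h0 hn).2 he q
  · simp only [hq, if_false]
    have : e.factorization q = 0 := by
      rw [← Finsupp.notMem_support_iff, Nat.support_factorization]
      exact hq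
    simp [this]

lemma uk_primeFactors (n e : ℕ) (hn : n ≠ 0) (he : e ∣ n) :
    (uk n e).primeFactors = e.primeFactors := by
  ext q
  rw [← Nat.support_factorization, Finsupp.mem_support_iff, uk_factorization]
  by_cases hq : q ∈ e.primeFactors
  · simp only [hq, if_true, iff_true]
    have hq' : q ∈ n.primeFactors :=
      Nat.primeFactors_mono he hn hq
    rw [← Finsupp.mem_support_iff, Nat.support_factorization]
    exact hq'
  · simp [hq]

lemma uk_unitary (n e : ℕ) (hn : n ≠ 0) (he : e ∣ n) :
    Nat.gcd (uk n e) (n / uk n e) = 1 := by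
  have hd : uk n e ∣ n := uk_dvd n e hn he
  have hne : n / uk n e ≠ 0 := fun h => hn (by
    have := Nat.div_mul_cancel hd
    rw [h, zero_mul] at this
    exact this.symm)
  have : Nat.Coprime (uk n e) (n / uk n e) := by
    rw [← Nat.disjoint_primeFactors (uk_ne_zero n e hn) hne, Finset.disjoint_left]
    intro q hq1 hq2
    rw [uk_primeFactors n e hn he] at hq1
    rw [← Nat.support_factorization, Finsupp.mem_support_iff,
      Nat.factorization_div hd, Finsupp.tsub_apply, uk_factorization] at hq2
    simp [hq1] at hq2
  exact this

lemma rad_uk_dvd (n e : ℕ) (hn : n ≠ 0) (he : e ∣ n) : rad (uk n e) ∣ e := by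
  rw [rad, uk_primeFactors n e hn he]
  exact Nat.prod_primeFactors_dvd e

lemma uk_eq_of_unitary (n d e : ℕ) (hn : n ≠ 0) (hd : d ∣ n)
    (hu : Nat.gcd d (n / d) = 1) (hed : e ∣ d) (hre : rad d ∣ e) :
    uk n e = d := by
  have hd0 : d ≠ 0 := fun h => hn (by simpa [h] using hd)
  have he0 : e ≠ 0 := fun h => hd0 (by simpa [h] using hed)
  have hpf : e.primeFactors = d.primeFactors := by
    apply Finset.Subset.antisymm (Nat.primeFactors_mono hed hd0)
    intro p hp
    have hpe : p ∣ e := dvd_trans (dvd_trans (Finset.dvd_prod_of_mem _ hp) hre) dvd_rfl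
    exact Nat.mem_primeFactors.2 ⟨Nat.prime_of_mem_primeFactors hp, hpe, he0⟩
  have hle : d.factorization ≤ n.factorization :=
    (Nat.factorization_le_iff_dvd hd0 hn).2 hd
  apply Nat.factorization_inj (Set.mem_setOf.2 (uk_ne_zero n e hn)) (Set.mem_setOf.2 hd0)
  ext q
  rw [uk_factorization, hpf]
  by_cases hq : q ∈ d.primeFactors
  · simp only [hq, if_true]
    -- show n.factorization q = d.factorization q
    have hqd : q ∣ d := Nat.dvd_of_mem_primeFactors hq
    have hqnd : ¬ q ∣ (n / d) := by
      intro hcon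
      have : q ∣ Nat.gcd d (n / d) := Nat.dvd_gcd hqd hcon
      rw [hu, Nat.dvd_one] at this
      exact (Nat.prime_of_mem_primeFactors hq).ne_one this
    have h0 : (n / d).factorization q = 0 := Nat.factorization_eq_zero_of_not_dvd hqnd
    rw [Nat.factorization_div hd, Finsupp.tsub_apply] at h0
    have := hle q
    omega
  · simp only [hq, if_false]
    rw [eq_comm, ← Finsupp.notMem_support_iff, Nat.support_factorization]
    exact hq

lemma fiber_eq (n d : ℕ) (hn : n ≠ 0) (hd : d ∣ n) (hu : Nat.gcd d (n / d) = 1) :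
    n.divisors.filter (fun e => uk n e = d) = d.divisors.filter (fun e => rad d ∣ e) := by
  have hd0 : d ≠ 0 := fun h => hn (by simpa [h] using hd)
  ext e
  simp only [Finset.mem_filter, Nat.mem_divisors]
  constructor
  · rintro ⟨⟨hen, -⟩, hk⟩
    exact ⟨⟨hk ▸ dvd_uk n e hn hen, hd0⟩, hk ▸ rad_uk_dvd n e hn hen⟩
  · rintro ⟨⟨hed, -⟩, hre⟩
    exact ⟨⟨hed.trans hd, hn⟩, uk_eq_of_unitary n d e hn hd hu hed hre⟩

lemma partition (n : ℕ) (hn : n ≠ 0) (g : ℕ → ℂ) :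
    ∑ e ∈ n.divisors, g e =
      ∑ d ∈ n.divisors.filter (fun d => Nat.gcd d (n / d) = 1),
        ∑ e ∈ d.divisors.filter (fun e => rad d ∣ e), g e := by
  have hmaps : ∀ e ∈ n.divisors,
      uk n e ∈ n.divisors.filter (fun d => Nat.gcd d (n / d) = 1) := by
    intro e he
    rw [Nat.mem_divisors] at he
    refine Finset.mem_filter.2 ⟨Nat.mem_divisors.2 ⟨uk_dvd n e hn he.1, hn⟩, ?_⟩
    exact uk_unitary n e hn he.1
  rw [← Finset.sum_fiberwise_of_maps_to hmaps]
  refine Finset.sum_congr rfl fun d hd => ?_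
  rw [Finset.mem_filter, Nat.mem_divisors] at hd
  rw [fiber_eq n d hn hd.1.1 hd.2]

end Stmt8Aux

theorem stmt8 (g gU : ℕ → ℂ)
    (h : ∀ n : ℕ, 1 ≤ n →
      ∑ d ∈ n.divisors, g d =
        ∑ d ∈ n.divisors.filter (fun d => Nat.gcd d (n / d) = 1), gU d) :
    ∀ n : ℕ, 1 ≤ n → gU n = ∑ d ∈ n.divisors.filter (fun d => rad n ∣ d), g d := by
  intro n
  induction n using Nat.strong_induction_on with
  | _ n ih =>
    intro hn
    have hn0 : n ≠ 0 := by omega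
    have H := h n hn
    have key := Stmt8Aux.partition n hn0 g
    have hmem : n ∈ n.divisors.filter (fun d => Nat.gcd d (n / d) = 1) := by
      refine Finset.mem_filter.2 ⟨Nat.mem_divisors_self n hn0, ?_⟩
      rw [Nat.div_self (by omega)]
      exact Nat.gcd_one_right n
    rw [← Finset.add_sum_erase _ _ hmem] at H key
    have herase :
        ∑ d ∈ (n.divisors.filter (fun d => Nat.gcd d (n / d) = 1)).erase n, gU d =
        ∑ d ∈ (n.divisors.filter (fun d => Nat.gcd d (n / d) = 1)).erase n,
          ∑ e ∈ d.divisors.filter (fun e => rad d ∣ e), g e := by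
      refine Finset.sum_congr rfl fun d hd => ?_
      rw [Finset.mem_erase, Finset.mem_filter, Nat.mem_divisors] at hd
      have hd1 : 1 ≤ d := Nat.pos_of_ne_zero (fun h' => hn0 (by simpa [h'] using hd.2.1.1))
      have hdlt : d < n := lt_of_le_of_ne (Nat.le_of_dvd (by omega) hd.2.1.1) hd.1
      exact ih d hdlt hd1
    rw [herase] at H
    rw [H] at key
    exact add_right_cancel key
end

section
/- Let n ≥ 1 and let x > 1 be real. Then Φ_n(x) = ∏_{j=1}^n (x^{gcd(j,n)} − 1)^{cos(2πj/n)}, where the exponents are the real powers (rpow) of the positive reals x^{gcd(j,n)} − 1, and Φ_n denotes the n-th cyclotomic polynomial evaluated at x. -/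
/-!
Since `x ^ g - 1 = ∏_{e ∣ g} Φ_e(x)`, the right-hand side regroups as `∏_{e ∣ n} Φ_e(x) ^ s_e`,
where `s_e` is the sum of `cos (2πj/n)` over the multiples `j` of `e` in `[1, n]`. Writing `j = e i`,
`s_e` is the real part of the sum of all `(n/e)`-th roots of unity, hence `1` for `e = n` and `0`
otherwise.
-/

open Polynomial Finset

theorem sum_Icc_one_eq_sum_range_of_eq {M : Type*} [AddCancelCommMonoid M] {f : ℕ → M} {m : ℕ}
    (hf : f m = f 0) : ∑ j ∈ Icc 1 m, f j = ∑ j ∈ range m, f j := by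
  have h := sum_range_succ f m
  rw [range_eq_Ico, sum_eq_sum_Ico_succ_bot m.add_one_pos, zero_add, Ico_add_one_right_eq_Icc, hf,
    add_comm] at h
  exact add_right_cancel h

theorem sum_range_cos_two_pi_mul_div_eq_zero {m : ℕ} (hm : 1 < m) :
    ∑ j ∈ range m, Real.cos (2 * Real.pi * j / m) = 0 := by
  have h := congrArg Complex.re ((Complex.isPrimitiveRoot_exp m (by omega)).geom_sum_eq_zero hm)
  rw [Complex.re_sum, Complex.zero_re] at h
  convert h using 2 with j
  rw [← Complex.exp_nat_mul, ← Complex.exp_ofReal_mul_I_re]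
  push_cast
  ring_nf

theorem sum_Icc_cos_two_pi_mul_div_self (m : ℕ) :
    ∑ j ∈ Icc 1 m, Real.cos (2 * Real.pi * j / m) = if m = 1 then 1 else 0 := by
  rcases lt_or_ge 1 m with hm | hm
  · rw [if_neg hm.ne', ← sum_range_cos_two_pi_mul_div_eq_zero hm]
    refine sum_Icc_one_eq_sum_range_of_eq ?_
    have hm0 : (m : ℝ) ≠ 0 := by positivity
    simp [hm0]
  · interval_cases m <;> simp

theorem sum_Icc_filter_dvd_eq_sum_Icc_mul {M : Type*} [AddCommMonoid M] (f : ℕ → M) {e n : ℕ}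
    (he : e ∣ n) :
    ∑ j ∈ Icc 1 n with e ∣ j, f j = ∑ i ∈ Icc 1 (n / e), f (e * i) := by
  obtain ⟨k, rfl⟩ := he
  rcases Nat.eq_zero_or_pos e with rfl | he
  · simp
  rw [Nat.mul_div_cancel_left k he]
  symm
  refine sum_nbij' (e * ·) (· / e) ?_ ?_ ?_ ?_ (fun _ _ => rfl)
  · intro i hi
    simp only [mem_filter, mem_Icc] at hi ⊢
    refine ⟨⟨?_, ?_⟩, dvd_mul_right e i⟩ <;> nlinarith
  · intro j hj
    simp only [mem_filter, mem_Icc] at hj ⊢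
    obtain ⟨⟨hj1, hjk⟩, i, rfl⟩ := hj
    rw [Nat.mul_div_cancel_left i he]
    constructor <;> nlinarith
  · intro i _
    exact Nat.mul_div_cancel_left i he
  · intro j hj
    exact Nat.mul_div_cancel' (mem_filter.mp hj).2

theorem sum_Icc_filter_dvd_cos_two_pi_mul_div {e n : ℕ} (hn : n ≠ 0) (he : e ∣ n) :
    ∑ j ∈ Icc 1 n with e ∣ j, Real.cos (2 * Real.pi * j / n) = if e = n then 1 else 0 := by
  obtain ⟨k, rfl⟩ := he
  have he : e ≠ 0 := left_ne_zero_of_mul hn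
  rw [sum_Icc_filter_dvd_eq_sum_Icc_mul _ (dvd_mul_right e k),
    Nat.mul_div_cancel_left k (Nat.pos_of_ne_zero he)]
  have hcast : ∀ i : ℕ, 2 * Real.pi * (e * i : ℕ) / (e * k : ℕ) = 2 * Real.pi * i / k := by
    intro i
    have : (e : ℝ) ≠ 0 := Nat.cast_ne_zero.mpr he
    push_cast
    field_simp
  simp only [hcast, sum_Icc_cos_two_pi_mul_div_self, left_eq_mul₀ he]

theorem prod_Icc_prod_divisors_gcd_rpow {a : ℕ → ℝ} (ha : ∀ e, 0 < a e) (c : ℕ → ℝ) (n : ℕ) :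
    ∏ j ∈ Icc 1 n, (∏ e ∈ (j.gcd n).divisors, a e) ^ c j =
      ∏ e ∈ n.divisors, a e ^ ∑ j ∈ Icc 1 n with e ∣ j, c j := by
  have hmem : ∀ j e, j ∈ Icc 1 n ∧ e ∈ (j.gcd n).divisors ↔
      j ∈ {j ∈ Icc 1 n | e ∣ j} ∧ e ∈ n.divisors := by
    intro j e
    simp only [mem_Icc, Nat.mem_divisors, mem_filter, Nat.dvd_gcd_iff]
    constructor
    · rintro ⟨hj, ⟨hej, hen⟩, -⟩
      exact ⟨⟨hj, hej⟩, hen, by omega⟩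
    · rintro ⟨⟨hj, hej⟩, hen, -⟩
      exact ⟨hj, ⟨hej, hen⟩, (Nat.gcd_pos_of_pos_left n hj.1).ne'⟩
  simp_rw [← Real.finsetProd_rpow _ _ (fun e _ => (ha e).le), Real.rpow_sum_of_pos (ha _)]
  exact prod_comm' hmem

theorem eval_prod_divisors_cyclotomic {R : Type*} [CommRing R] {g : ℕ} (hg : 0 < g) (x : R) :
    ∏ e ∈ g.divisors, (cyclotomic e R).eval x = x ^ g - 1 := by
  rw [← eval_prod, prod_cyclotomic_eq_X_pow_sub_one hg]
  simp

theorem stmt10 (n : ℕ) (hn : 1 ≤ n) (x : ℝ) (hx : 1 < x) :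
    (cyclotomic n ℝ).eval x =
      ∏ j ∈ Finset.Icc 1 n,
        (x ^ (Nat.gcd j n) - 1) ^ Real.cos (2 * Real.pi * j / n) := by
  have hn0 : n ≠ 0 := by omega
  have hfactor : ∀ j ∈ Icc 1 n,
      x ^ j.gcd n - 1 = ∏ e ∈ (j.gcd n).divisors, (cyclotomic e ℝ).eval x := fun j hj =>
    (eval_prod_divisors_cyclotomic (Nat.gcd_pos_of_pos_left n (mem_Icc.mp hj).1) x).symm
  rw [prod_congr rfl fun j hj => by rw [hfactor j hj],
    prod_Icc_prod_divisors_gcd_rpow (fun e => cyclotomic_pos' e hx),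
    prod_eq_single_of_mem n (Nat.mem_divisors_self n hn0)]
  · rw [sum_Icc_filter_dvd_cos_two_pi_mul_div hn0 dvd_rfl, if_pos rfl, Real.rpow_one]
  · intro e he hne
    rw [sum_Icc_filter_dvd_cos_two_pi_mul_div hn0 (Nat.dvd_of_mem_divisors he), if_neg hne,
      Real.rpow_zero]
end

section
/- Let f : ℕ_{≥1} → ℂ be an arbitrary function and let n, k ≥ 1. Then ∑_{j=1}^n f(gcd(j,n)) · exp(2πijk/n) = ∑_{d ∣ gcd(k,n)} d · (μ*f)(n/d), where the sum on the right runs over the positive divisors d of gcd(k,n). -/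
open Complex Finset

/-- The Dirichlet convolution `(μ*f)(m) = ∑_{e ∣ m} μ(e) f(m/e)` of the Möbius
function with `f`. -/
noncomputable def muConv (f : ℕ → ℂ) (m : ℕ) : ℂ :=
  ∑ e ∈ m.divisors, (ArithmeticFunction.moebius e : ℂ) * f (m / e)

-- Möbius inversion: summing the convolution over divisors recovers f
lemma sum_muConv (f : ℕ → ℂ) {m : ℕ} (hm : 0 < m) :
    ∑ d ∈ m.divisors, muConv f d = f m := by
  have := (ArithmeticFunction.sum_eq_iff_sum_mul_moebius_eq
    (R := ℂ) (f := muConv f) (g := f)).mpr ?_ m hm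
  · exact this
  · intro n hn
    rw [Nat.sum_divisorsAntidiagonal (f := fun a b => (ArithmeticFunction.moebius a : ℂ) * f b)]
    unfold muConv
    exact rfl

-- roots of unity sum
lemma rootsum (N k : ℕ) (hN : 0 < N) :
    ∑ m ∈ Finset.Icc 1 N, Complex.exp (2 * Real.pi * Complex.I * m * k / N)
      = if N ∣ k then (N : ℂ) else 0 := by
  have hN0 : (N : ℂ) ≠ 0 := Nat.cast_ne_zero.mpr hN.ne'
  set z : ℂ := Complex.exp (2 * Real.pi * Complex.I * k / N) with hz
  have hterm : ∀ m : ℕ, Complex.exp (2 * Real.pi * Complex.I * m * k / N) = z ^ m := by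
    intro m
    rw [hz, ← Complex.exp_nat_mul]
    ring_nf
  have hzN : z ^ N = 1 := by
    rw [hz, ← Complex.exp_nat_mul]
    have : (N : ℂ) * (2 * Real.pi * Complex.I * k / N) = k * (2 * Real.pi * Complex.I) := by
      field_simp
    rw [this]
    exact_mod_cast Complex.exp_int_mul_two_pi_mul_I (k : ℤ)
  by_cases hdvd : N ∣ k
  · have hz1 : z = 1 := by
      obtain ⟨c, rfl⟩ := hdvd
      rw [hz]
      have : 2 * Real.pi * Complex.I * (N * c : ℕ) / N = (c : ℤ) * (2 * Real.pi * Complex.I) := by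
        push_cast; field_simp
      rw [this, Complex.exp_int_mul_two_pi_mul_I]
    simp [hterm, hz1, Nat.card_Icc, hdvd]
  · have hz1 : z ≠ 1 := by
      intro h
      rw [hz, Complex.exp_eq_one_iff] at h
      obtain ⟨c, hc⟩ := h
      apply hdvd
      have h2 : (2 : ℂ) * Real.pi * Complex.I ≠ 0 := by
        simp [Real.pi_ne_zero, Complex.I_ne_zero, Complex.ofReal_ne_zero]
      rw [div_eq_iff hN0] at hc
      have hck : (k : ℂ) = c * N := by
        rw [show (2:ℂ) * Real.pi * Complex.I * k = (k:ℂ) * (2 * Real.pi * Complex.I) by ring,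
          show (c:ℂ) * (2 * Real.pi * Complex.I) * N = ((c:ℂ) * N) * (2 * Real.pi * Complex.I) by ring] at hc
        exact mul_right_cancel₀ h2 hc
      have hck' : (k : ℤ) = c * N := by exact_mod_cast hck
      have hc0 : 0 ≤ c := by
        by_contra hcneg
        push_neg at hcneg
        have : (k : ℤ) < 0 := by
          rw [hck']
          exact mul_neg_of_neg_of_pos hcneg (by exact_mod_cast hN)
        omega
      refine ⟨c.toNat, ?_⟩
      have htn : (c.toNat : ℤ) = c := Int.toNat_of_nonneg hc0
      have : (k : ℤ) = ((N * c.toNat : ℕ) : ℤ) := by push_cast [htn]; linarith [hck']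
      exact_mod_cast this
    simp only [hterm, hdvd, if_false]
    have h1 : ∑ m ∈ Finset.Icc 1 N, z ^ m = z * ∑ m ∈ Finset.range N, z ^ m := by
      rw [Finset.mul_sum]
      rw [show Finset.Icc 1 N = Finset.Ico 1 (N+1) by rfl, Finset.sum_Ico_eq_sum_range]
      simp [pow_succ, pow_add, mul_comm]
    rw [h1, geom_sum_eq hz1, hzN]
    simp

set_option maxHeartbeats 400000 in
theorem stmt12 (f : ℕ → ℂ) (n k : ℕ) (hn : 1 ≤ n) (hk : 1 ≤ k) :
    ∑ j ∈ Finset.Icc 1 n,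
        f (Nat.gcd j n) * Complex.exp (2 * Real.pi * Complex.I * j * k / n) =
      ∑ d ∈ (Nat.gcd k n).divisors, (d : ℂ) * muConv f (n / d) := by
  have hn0 : 0 < n := hn
  set E : ℕ → ℂ := fun j => Complex.exp (2 * Real.pi * Complex.I * j * k / n) with hE
  calc
    ∑ j ∈ Finset.Icc 1 n, f (Nat.gcd j n) * E j
        = ∑ j ∈ Finset.Icc 1 n, ∑ d ∈ n.divisors,
            (if d ∣ j then muConv f d * E j else 0) := by
          apply Finset.sum_congr rfl
          intro j hj
          have hg : 0 < Nat.gcd j n := Nat.gcd_pos_of_pos_right _ hn0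
          have hdiv : (Nat.gcd j n).divisors = n.divisors.filter (· ∣ j) := by
            ext a
            simp only [Nat.mem_divisors, Finset.mem_filter, Nat.dvd_gcd_iff, hn0.ne',
              hg.ne', ne_eq, not_false_eq_true, and_true]
            tauto
          rw [← sum_muConv f hg, hdiv, Finset.sum_mul, Finset.sum_filter]
    _ = ∑ d ∈ n.divisors, ∑ j ∈ Finset.Icc 1 n,
            (if d ∣ j then muConv f d * E j else 0) := Finset.sum_comm
    _ = ∑ d ∈ n.divisors, muConv f d * (if (n / d) ∣ k then ((n / d : ℕ) : ℂ) else 0) := by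
          apply Finset.sum_congr rfl
          intro d hd
          obtain ⟨hdn, -⟩ := Nat.mem_divisors.mp hd
          have hd0 : 0 < d := Nat.pos_of_mem_divisors hd
          have hnd0 : 0 < n / d := Nat.div_pos (Nat.le_of_dvd hn0 hdn) hd0
          rw [← Finset.sum_filter]
          have hbij : ∑ j ∈ (Finset.Icc 1 n).filter (fun j => d ∣ j), muConv f d * E j
              = ∑ m ∈ Finset.Icc 1 (n / d), muConv f d * E (d * m) := by
            refine (Finset.sum_nbij' (fun m => d * m) (fun j => j / d) ?_ ?_ ?_ ?_ ?_).symm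
            · intro m hm
              simp only [Finset.mem_Icc] at hm
              simp only [Finset.mem_filter, Finset.mem_Icc]
              refine ⟨⟨Nat.one_le_iff_ne_zero.mpr (Nat.mul_ne_zero hd0.ne' (by omega)), ?_⟩, Dvd.intro m rfl⟩
              calc d * m ≤ d * (n / d) := Nat.mul_le_mul_left d hm.2
                _ = n := Nat.mul_div_cancel' hdn
            · intro j hj
              simp only [Finset.mem_filter, Finset.mem_Icc] at hj
              obtain ⟨⟨hj1, hj2⟩, hjd⟩ := hj
              simp only [Finset.mem_Icc]
              exact ⟨(Nat.one_le_div_iff hd0).mpr (Nat.le_of_dvd hj1 hjd),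
                Nat.div_le_div_right hj2⟩
            · intro m hm
              exact Nat.mul_div_cancel_left m hd0
            · intro j hj
              simp only [Finset.mem_filter] at hj
              exact Nat.mul_div_cancel' hj.2
            · intro m hm
              rfl
          rw [hbij, ← Finset.mul_sum]
          congr 1
          rw [← rootsum (n / d) k hnd0]
          apply Finset.sum_congr rfl
          intro m hm
          have hcast : ((n / d : ℕ) : ℂ) * d = n := by exact_mod_cast Nat.div_mul_cancel hdn
          have hnd' : ((n / d : ℕ) : ℂ) ≠ 0 := Nat.cast_ne_zero.mpr hnd0.ne'
          have hn' : (n : ℂ) ≠ 0 := Nat.cast_ne_zero.mpr hn0.ne'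
          have harg : 2 * (Real.pi : ℂ) * Complex.I * ((d * m : ℕ) : ℂ) * k / n
              = 2 * Real.pi * Complex.I * m * k / ((n / d : ℕ) : ℂ) := by
            rw [div_eq_div_iff hn' hnd']
            push_cast
            linear_combination 2 * (Real.pi : ℂ) * Complex.I * m * k * hcast
          simp only [hE]
          exact congrArg Complex.exp harg
    _ = ∑ d ∈ n.divisors,
          ((if (n / d) ∣ k then ((n / d : ℕ) : ℂ) else 0) * muConv f (n / (n / d))) := by
          apply Finset.sum_congr rfl
          intro d hd
          obtain ⟨hdn, -⟩ := Nat.mem_divisors.mp hd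
          rw [Nat.div_div_self hdn hn0.ne', mul_comm]
    _ = ∑ d ∈ n.divisors, (if d ∣ k then (d : ℂ) else 0) * muConv f (n / d) :=
          Nat.sum_div_divisors n (fun e => (if e ∣ k then (e : ℂ) else 0) * muConv f (n / e))
    _ = ∑ d ∈ n.divisors.filter (· ∣ k), (d : ℂ) * muConv f (n / d) := by
          rw [Finset.sum_filter]
          apply Finset.sum_congr rfl
          intro d hd
          by_cases h : d ∣ k <;> simp [h]
    _ = ∑ d ∈ (Nat.gcd k n).divisors, (d : ℂ) * muConv f (n / d) := by
          congr 1
          ext a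
          have hg : 0 < Nat.gcd k n := Nat.gcd_pos_of_pos_right _ hn0
          simp only [Nat.mem_divisors, Finset.mem_filter, Nat.dvd_gcd_iff, hn0.ne',
            hg.ne', ne_eq, not_false_eq_true, and_true]
          tauto
end

section
/- Let n ≥ 1. Then in ℂ[X] one has the Menon-type identity ∏_{1 ≤ j ≤ n, gcd(j,n) = 1} (X^{gcd(j−1,n)} − 1) = ∏_{d ∣ n} Φ_d(X)^{φ(n)/φ(d)}, where for j = 1 one reads gcd(0,n) = n, and each exponent φ(n)/φ(d) is a positive integer since φ(d) divides φ(n) for d ∣ n. -/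
open Complex Polynomial Finset

lemma count_aux (n d : ℕ) (hn : 1 ≤ n) (hdn : d ∣ n) (hd0 : d ≠ 0) :
    (((Finset.Icc 1 n).filter (fun j => Nat.gcd j n = 1)).filter
        (fun j => d ∣ j - 1)).card = n.totient / d.totient := by
  have hn0 : n ≠ 0 := by omega
  haveI : NeZero n := ⟨hn0⟩
  haveI : NeZero d := ⟨hd0⟩
  set f : (ZMod n)ˣ →* (ZMod d)ˣ := ZMod.unitsMap hdn with hf
  have hsurj : Function.Surjective f := ZMod.unitsMap_surjective hdn
  -- cardinality of the kernel
  have hker : Nat.card f.ker * d.totient = n.totient := by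
    have h1 := Subgroup.card_mul_index f.ker
    rw [Subgroup.index_ker] at h1
    have h2 : Nat.card f.range = d.totient := by
      rw [(MonoidHom.range_eq_top).2 hsurj, Subgroup.card_top,
        Nat.card_eq_fintype_card, ZMod.card_units_eq_totient]
    rw [h2] at h1
    rw [h1, Nat.card_eq_fintype_card, ZMod.card_units_eq_totient]
  have htot : 0 < d.totient := Nat.totient_pos.2 (Nat.pos_of_ne_zero hd0)
  have hkercard : n.totient / d.totient = Nat.card f.ker :=
    Nat.div_eq_of_eq_mul_left htot hker.symm
  rw [hkercard]
  -- kernel as a filter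
  have hker2 : Nat.card f.ker =
      ((Finset.univ : Finset (ZMod n)ˣ).filter (fun u => f u = 1)).card := by
    rw [Nat.card_eq_fintype_card]
    rw [Fintype.card_eq_nat_card]
    rw [Nat.card_eq_fintype_card, ← Fintype.card_subtype]
    exact Fintype.card_congr (Equiv.subtypeEquivRight fun x => by
      simp [MonoidHom.mem_ker])
  rw [hker2]
  -- bijection between the two filters
  apply Finset.card_bij (fun j hj => ZMod.unitOfCoprime j
    ((Finset.mem_filter.mp (Finset.mem_filter.mp hj).1).2))
  · intro j hj
    simp only [Finset.mem_filter, Finset.mem_Icc] at hj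
    obtain ⟨⟨⟨hj1, hj2⟩, hcop⟩, hdvd⟩ := hj
    refine Finset.mem_filter.mpr ⟨Finset.mem_univ _, ?_⟩
    apply Units.ext
    have hjj : j = (j - 1) + 1 := by omega
    rw [hf]
    show ((ZMod.castHom hdn (ZMod d)) ((ZMod.unitOfCoprime j hcop : (ZMod n)ˣ) : ZMod n)) = 1
    rw [ZMod.coe_unitOfCoprime, map_natCast, hjj, Nat.cast_add, Nat.cast_one,
      (ZMod.natCast_eq_zero_iff _ _).2 hdvd, zero_add]
  · intro j1 hj1 j2 hj2 heq
    have h1 := Finset.mem_filter.mp (Finset.mem_filter.mp hj1).1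
    have h2 := Finset.mem_filter.mp (Finset.mem_filter.mp hj2).1
    rw [Finset.mem_Icc] at h1 h2
    have hcast : (j1 : ZMod n) = (j2 : ZMod n) := by
      have := congrArg (Units.val) heq
      simpa [ZMod.coe_unitOfCoprime] using this
    have hmod := (ZMod.natCast_eq_natCast_iff _ _ _).1 hcast
    rcases le_total j1 j2 with hle | hle
    · have hdd := (Nat.modEq_iff_dvd' hle).1 hmod
      have := Nat.eq_zero_of_dvd_of_lt hdd (by omega)
      omega
    · have hdd := (Nat.modEq_iff_dvd' hle).1 hmod.symm
      have := Nat.eq_zero_of_dvd_of_lt hdd (by omega)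
      omega
  · intro u hu
    have hfu : f u = 1 := (Finset.mem_filter.mp hu).2
    by_cases hv : (u : ZMod n).val = 0
    · have hn1 : n = 1 := by
        have hc := ZMod.val_coe_unit_coprime u
        rw [hv] at hc
        simpa [Nat.coprime_zero_left] using hc
      subst hn1
      have hmem : (1 : ℕ) ∈ ((Finset.Icc 1 1).filter (fun j => Nat.gcd j 1 = 1)).filter
          (fun j => d ∣ j - 1) := by
        simp
      exact ⟨1, hmem, Units.ext (Subsingleton.elim _ _)⟩
    · have hlt : (u : ZMod n).val < n := ZMod.val_lt _
      have hc : Nat.Coprime (u : ZMod n).val n := ZMod.val_coe_unit_coprime u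
      have h1 : (((u : ZMod n).val : ℕ) : ZMod d) = 1 := by
        have h := congrArg (Units.val) hfu
        rw [hf] at h
        have h' : ((ZMod.castHom hdn (ZMod d)) ((u : (ZMod n)ˣ) : ZMod n)) = 1 := h
        rw [ZMod.castHom_apply, ← ZMod.natCast_val] at h'
        exact h'
      have hdvd : d ∣ (u : ZMod n).val - 1 := by
        have hv1 : 1 ≤ (u : ZMod n).val := by omega
        have h2 : (((u : ZMod n).val - 1 : ℕ) : ZMod d) = 0 := by
          rw [Nat.cast_sub hv1, h1, Nat.cast_one, sub_self]
        exact (ZMod.natCast_eq_zero_iff _ _).1 h2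
      have hmem : (u : ZMod n).val ∈ ((Finset.Icc 1 n).filter (fun j => Nat.gcd j n = 1)).filter
          (fun j => d ∣ j - 1) := by
        refine Finset.mem_filter.mpr ⟨Finset.mem_filter.mpr ⟨?_, hc⟩, hdvd⟩
        rw [Finset.mem_Icc]
        omega
      refine ⟨(u : ZMod n).val, hmem, ?_⟩
      apply Units.ext
      rw [ZMod.coe_unitOfCoprime, ZMod.natCast_val, ZMod.cast_id]

theorem stmt14 (n : ℕ) (hn : 1 ≤ n) :
    ∏ j ∈ (Finset.Icc 1 n).filter (fun j => Nat.gcd j n = 1),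
        ((X : Polynomial ℂ) ^ (Nat.gcd (j - 1) n) - 1) =
      ∏ d ∈ n.divisors, (cyclotomic d ℂ) ^ (Nat.totient n / Nat.totient d) := by
  have hn0 : n ≠ 0 := by omega
  have step1 : ∀ j ∈ (Finset.Icc 1 n).filter (fun j => Nat.gcd j n = 1),
      ((X : Polynomial ℂ) ^ (Nat.gcd (j - 1) n) - 1)
        = ∏ d ∈ n.divisors.filter (· ∣ j - 1), cyclotomic d ℂ := by
    intro j hj
    have hg : 0 < Nat.gcd (j - 1) n := Nat.gcd_pos_of_pos_right _ (by omega)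
    rw [← prod_cyclotomic_eq_X_pow_sub_one hg]
    apply Finset.prod_congr _ (fun _ _ => rfl)
    ext e
    have hgne : Nat.gcd (j - 1) n ≠ 0 := hg.ne'
    simp only [Nat.mem_divisors, Finset.mem_filter, Nat.dvd_gcd_iff]
    tauto
  rw [Finset.prod_congr rfl step1]
  rw [Finset.prod_comm' (t' := n.divisors)
    (s' := fun d => ((Finset.Icc 1 n).filter (fun j => Nat.gcd j n = 1)).filter
      (fun j => d ∣ j - 1))
    (by intro j d; simp only [Finset.mem_filter]; tauto)]
  apply Finset.prod_congr rfl
  intro d hd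
  rw [Finset.prod_const]
  congr 1
  exact count_aux n d hn (Nat.mem_divisors.mp hd).1 (Nat.pos_of_mem_divisors hd).ne'
end

section
/- Let n ≥ 1, let χ be a Dirichlet character mod n with conductor d (so d ∣ n), and let x > 1 be real. Then ∏_{j=1}^n (x^{gcd(j−1,n)} − 1)^{Re(χ(j))} = ∏_{δ ∣ n/d} Φ_{dδ}(x)^{φ(n)/φ(dδ)}, where on the left the exponents are real powers (rpow) of the positive reals x^{gcd(j−1,n)} − 1 (with gcd(0,n) = n for j = 1), and on the right each exponent φ(n)/φ(dδ) is a positive integer and Φ_{dδ}(x) > 0. -/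
/-!
Write `x ^ gcd (j - 1) n - 1 = ∏_{m ∣ gcd (j - 1) n} Φ_m(x)`. Collecting the factor `Φ_m(x)`
over `j` turns the left side into `∏_{m ∣ n} Φ_m(x) ^ e_m`, where `e_m` is the real part of
`∑_{j ≡ 1 (mod m)} χ(j)`. Only units contribute, so this is the sum of `χ` over the kernel of
`(ℤ/n)ˣ → (ℤ/m)ˣ`, a group of order `φ(n)/φ(m)`. By orthogonality it equals `φ(n)/φ(m)` if `χ` is
trivial on that kernel, i.e. if `χ` factors through level `m`, i.e. if the conductor divides `m`,
and vanishes otherwise. The surviving divisors are the `m = dδ` with `δ ∣ n/d`.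
-/

open Complex Polynomial Finset

theorem Real.prod_rpow_prod_filter {ι κ : Type*} (s : Finset ι) (t : Finset κ)
    (p : κ → ι → Prop) [∀ k i, Decidable (p k i)] {a : κ → ℝ} (ha : ∀ k ∈ t, 0 < a k)
    (e : ι → ℝ) :
    ∏ i ∈ s, (∏ k ∈ t with p k i, a k) ^ e i = ∏ k ∈ t, a k ^ ∑ i ∈ s with p k i, e i := by
  calc ∏ i ∈ s, (∏ k ∈ t with p k i, a k) ^ e i
      = ∏ i ∈ s, ∏ k ∈ t, a k ^ (if p k i then e i else 0) := by
        refine prod_congr rfl fun i _ ↦ ?_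
        rw [← Real.finsetProd_rpow _ _ fun k hk ↦ (ha k (mem_filter.1 hk).1).le, prod_filter]
        exact prod_congr rfl fun k _ ↦ by split_ifs <;> simp
    _ = ∏ k ∈ t, a k ^ ∑ i ∈ s with p k i, e i := by
        rw [prod_comm]
        refine prod_congr rfl fun k hk ↦ ?_
        rw [sum_filter, Real.rpow_sum_of_pos (ha k hk)]

theorem Polynomial.pow_gcd_sub_one_eq_prod_eval_cyclotomic {R : Type*} [CommRing R] (x : R)
    (a : ℕ) {n : ℕ} (hn : n ≠ 0) :
    x ^ Nat.gcd a n - 1 = ∏ m ∈ n.divisors with m ∣ a, (cyclotomic m R).eval x := by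
  have hdivisors : (Nat.gcd a n).divisors = {m ∈ n.divisors | m ∣ a} := by
    rw [← Nat.divisors_filter_dvd_of_dvd hn (Nat.gcd_dvd_right a n)]
    exact filter_congr fun m hm ↦ by
      rw [Nat.dvd_gcd_iff, and_iff_left (Nat.dvd_of_mem_divisors hm)]
  rw [← hdivisors, ← eval_prod,
    prod_cyclotomic_eq_X_pow_sub_one (Nat.gcd_pos_of_pos_right a (Nat.pos_of_ne_zero hn))]
  simp

theorem Nat.prod_divisors_filter_dvd {M : Type*} [CommMonoid M] (f : ℕ → M) {n d : ℕ}
    (hn : n ≠ 0) (hd : d ∣ n) :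
    ∏ m ∈ n.divisors with d ∣ m, f m = ∏ δ ∈ (n / d).divisors, f (d * δ) := by
  have hd0 : 0 < d := Nat.pos_of_dvd_of_pos hd (Nat.pos_of_ne_zero hn)
  refine prod_nbij' (· / d) (d * ·) (fun m hm ↦ ?_) (fun δ hδ ↦ ?_) (fun m hm ↦ ?_)
    (fun δ _ ↦ Nat.mul_div_cancel_left δ hd0) (fun m hm ↦ ?_)
  · simp only [mem_filter, Nat.mem_divisors] at hm ⊢
    exact ⟨Nat.div_dvd_div hm.2 hm.1.1,
      (Nat.div_pos (Nat.le_of_dvd (Nat.pos_of_ne_zero hn) hd) hd0).ne'⟩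
  · simp only [mem_filter, Nat.mem_divisors] at hδ ⊢
    exact ⟨⟨Nat.mul_dvd_of_dvd_div hd hδ.1, hn⟩, dvd_mul_right d δ⟩
  · exact Nat.mul_div_cancel' (mem_filter.1 hm).2
  · rw [Nat.mul_div_cancel' (mem_filter.1 hm).2]

theorem Fintype.sum_units_eq_sum {R M : Type*} [Monoid R] [Fintype R] [Fintype Rˣ]
    [AddCommMonoid M] (f : R → M) (hf : ∀ a, ¬IsUnit a → f a = 0) :
    ∑ u : Rˣ, f u = ∑ a, f a := by
  calc ∑ u : Rˣ, f u = ∑ a ∈ univ.map ⟨Units.val, Units.val_injective⟩, f a := by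
        rw [sum_map]; rfl
    _ = ∑ a, f a := Finset.sum_subset (subset_univ _) fun a _ ha ↦ hf a fun ⟨u, hu⟩ ↦
        ha (hu ▸ mem_map_of_mem _ (mem_univ u))

theorem ZMod.sum_Icc_one_natCast {M : Type*} [AddCommMonoid M] {n : ℕ} [NeZero n]
    (f : ZMod n → M) : ∑ j ∈ Icc 1 n, f j = ∑ c, f c := by
  refine sum_nbij' (fun j ↦ (j : ZMod n)) (fun c ↦ (c - 1).val + 1) (fun _ _ ↦ mem_univ _)
    (fun c _ ↦ mem_Icc.2 ⟨Nat.le_add_left 1 _, (c - 1).val_lt⟩) (fun j hj ↦ ?_) (fun c _ ↦ ?_)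
    (fun _ _ ↦ rfl)
  · obtain ⟨hj1, hjn⟩ := mem_Icc.1 hj
    rw [← Nat.cast_pred hj1, ZMod.val_natCast_of_lt (by omega), Nat.sub_add_cancel hj1]
  · simp

theorem ZMod.natCast_eq_one_iff_dvd_sub_one {m j : ℕ} (hj : 1 ≤ j) :
    (j : ZMod m) = 1 ↔ m ∣ j - 1 := by
  obtain ⟨i, rfl⟩ := Nat.exists_eq_add_of_le' hj
  simp [ZMod.natCast_eq_zero_iff]

theorem ZMod.card_ker_unitsMap {m n : ℕ} [NeZero n] (hm : m ∣ n) :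
    Nat.card (ZMod.unitsMap hm).ker = n.totient / m.totient := by
  have : NeZero m := ⟨fun h ↦ NeZero.ne n (Nat.eq_zero_of_zero_dvd (h ▸ hm))⟩
  have hindex : (ZMod.unitsMap hm).ker.index = m.totient := by
    rw [Subgroup.index_ker, MonoidHom.range_eq_top_of_surjective _ (ZMod.unitsMap_surjective hm),
      Subgroup.card_top, Nat.card_eq_fintype_card, ZMod.card_units_eq_totient]
  rw [← ZMod.card_units_eq_totient n, ← Nat.card_eq_fintype_card,
    ← Subgroup.card_mul_index (ZMod.unitsMap hm).ker, hindex,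
    Nat.mul_div_cancel _ (Nat.totient_pos.2 (NeZero.pos m))]

namespace DirichletCharacter

theorem sum_ker_unitsMap {R : Type*} [CommRing R] [IsDomain R] {n m : ℕ} [NeZero n]
    (χ : DirichletCharacter R n) (hm : m ∣ n) :
    ∑ u : (ZMod.unitsMap hm).ker, χ (u : (ZMod n)ˣ) =
      ((if χ.conductor ∣ m then n.totient / m.totient else 0 : ℕ) : R) := by
  classical
  let f : (ZMod.unitsMap hm).ker →* R :=
    (Units.coeHom R).comp (χ.toUnitHom.comp (ZMod.unitsMap hm).ker.subtype)
  have hf : f = 1 ↔ χ.conductor ∣ m := by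
    rw [← χ.mem_conductorSet_iff_conductor_dvd hm, mem_conductorSet_iff,
      factorsThrough_iff_ker_unitsMap hm]
    simp only [DFunLike.ext_iff, f, MonoidHom.comp_apply, Units.coeHom_apply,
      Subgroup.coe_subtype, MonoidHom.one_apply, Units.val_eq_one, SetLike.le_def,
      MonoidHom.mem_ker, Subtype.forall]
  have hsum : ∑ u : (ZMod.unitsMap hm).ker, χ (u : (ZMod n)ˣ) = ∑ u, f u :=
    sum_congr rfl fun u _ ↦ (MulChar.coe_toUnitHom χ u).symm
  rw [hsum, sum_hom_units f, if_congr hf rfl rfl, ← ZMod.card_ker_unitsMap hm,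
    Nat.card_eq_fintype_card]

theorem sum_Icc_filter_dvd_sub_one_eq_sum_ker {R : Type*} [CommRing R] {n m : ℕ} [NeZero n]
    (χ : DirichletCharacter R n) (hm : m ∣ n) :
    ∑ j ∈ Icc 1 n with m ∣ j - 1, χ j = ∑ u : (ZMod.unitsMap hm).ker, χ (u : (ZMod n)ˣ) := by
  set g : ZMod n → R := fun c ↦ if (c.cast : ZMod m) = 1 then χ c else 0
  calc ∑ j ∈ Icc 1 n with m ∣ j - 1, χ j
      = ∑ j ∈ Icc 1 n, g j := by
        rw [sum_filter]
        refine sum_congr rfl fun j hj ↦ ?_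
        simp only [g, ZMod.cast_natCast hm, ZMod.natCast_eq_one_iff_dvd_sub_one (mem_Icc.1 hj).1]
    _ = ∑ u : (ZMod n)ˣ, g u := by
        rw [ZMod.sum_Icc_one_natCast, Fintype.sum_units_eq_sum]
        intro a ha
        simp [g, χ.map_nonunit ha]
    _ = ∑ u : (ZMod.unitsMap hm).ker, χ (u : (ZMod n)ˣ) := by
        have hg : ∀ u : (ZMod n)ˣ, g u = if u ∈ (ZMod.unitsMap hm).ker then χ u else 0 := by
          intro u
          simp only [g, MonoidHom.mem_ker, Units.ext_iff, ZMod.unitsMap_val, Units.val_one]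
        simp only [hg]
        rw [← sum_filter]
        exact sum_subtype _ (by simp) _

end DirichletCharacter

theorem stmt15 (n : ℕ) (hn : 1 ≤ n) (χ : DirichletCharacter ℂ n)
    (x : ℝ) (hx : 1 < x) :
    ∏ j ∈ Finset.Icc 1 n,
        (x ^ (Nat.gcd (j - 1) n) - 1) ^ ((χ (j : ZMod n)).re) =
      ∏ δ ∈ (n / χ.conductor).divisors,
        ((cyclotomic (χ.conductor * δ) ℝ).eval x) ^
          (Nat.totient n / Nat.totient (χ.conductor * δ)) := by
  have : NeZero n := ⟨by omega⟩
  have hexponent : ∀ m ∈ n.divisors, ∑ j ∈ Icc 1 n with m ∣ j - 1, (χ j).re =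
      ((if χ.conductor ∣ m then n.totient / m.totient else 0 : ℕ) : ℝ) := fun m hm ↦ by
    rw [← Complex.re_sum, χ.sum_Icc_filter_dvd_sub_one_eq_sum_ker (Nat.dvd_of_mem_divisors hm),
      χ.sum_ker_unitsMap, Complex.natCast_re]
  calc ∏ j ∈ Icc 1 n, (x ^ Nat.gcd (j - 1) n - 1) ^ (χ j).re
      = ∏ j ∈ Icc 1 n, (∏ m ∈ n.divisors with m ∣ j - 1, (cyclotomic m ℝ).eval x) ^ (χ j).re := by
        simp only [pow_gcd_sub_one_eq_prod_eval_cyclotomic x _ (NeZero.ne n)]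
    _ = ∏ m ∈ n.divisors, (cyclotomic m ℝ).eval x ^
          ((if χ.conductor ∣ m then n.totient / m.totient else 0 : ℕ) : ℝ) := by
        rw [Real.prod_rpow_prod_filter _ _ _ fun m _ ↦ cyclotomic_pos' m hx]
        exact prod_congr rfl fun m hm ↦ by rw [hexponent m hm]
    _ = ∏ m ∈ n.divisors with χ.conductor ∣ m,
          (cyclotomic m ℝ).eval x ^ (n.totient / m.totient) := by
        rw [prod_filter]
        refine prod_congr rfl fun m _ ↦ ?_
        split_ifs <;> simp
    _ = _ := Nat.prod_divisors_filter_dvd _ (NeZero.ne n) χ.conductor_dvd_level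
end
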